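/- arXiv:2207.08540 — 2 statements merged into one kernel-verified Lean document; each statement's English description precedes it below -/
import Mathlib

section
/- Let $H$ be a real inner product space, $p \in (0,1]$, $\beta \in (0, 1/2]$, and $\gamma = \frac{1-p}{p(1-\beta)} + (1-\beta)$. For any vectors $u, g, g' \in H$, define $\bar u = (1-\beta)u + \beta g' + \gamma(g' - g)$. Then $p\,\|\bar u - g'\|^2 + (1-p)\,\|u - g'\|^2 \leq (1 - p\beta)\,\|u - g\|^2 + \frac{5}{p}\,\|g' - g\|^2$. -/
open scoped RealInnerProductSpace


theorem msvr_one_step {H : Type*} [NormedAddCommGroup H] [InnerProductSpace ℝ H]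
    (p β : ℝ) (hp0 : 0 < p) (hp1 : p ≤ 1) (hβ0 : 0 < β) (hβ : β ≤ 1 / 2)
    (u g g' : H) :
    p * ‖((1 - β) • u + β • g' + ((1 - p) / (p * (1 - β)) + (1 - β)) • (g' - g)) - g'‖ ^ 2
      + (1 - p) * ‖u - g'‖ ^ 2
    ≤ (1 - p * β) * ‖u - g‖ ^ 2 + (5 / p) * ‖g' - g‖ ^ 2 := by
  set c : ℝ := (1 - p) / (p * (1 - β)) with hc_def
  have hb : (1 : ℝ)/2 ≤ 1 - β := by linarith
  have hbpos : (0:ℝ) < 1 - β := by linarith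
  have hpne : p ≠ 0 := ne_of_gt hp0
  have hbne : (1:ℝ) - β ≠ 0 := ne_of_gt hbpos
  have hc : p * (1 - β) * c = 1 - p := by
    rw [hc_def]; field_simp
  have hcnn : 0 ≤ c := by
    apply div_nonneg (by linarith) (by positivity)
  have key : ((1 - β) • u + β • g' + (c + (1 - β)) • (g' - g)) - g'
      = (1 - β) • (u - g) + c • (g' - g) := by
    module
  rw [key]
  set a := u - g
  set d := g' - g
  have hug : u - g' = a - d := by simp only [a, d]; abel
  rw [hug]
  have e1 : ‖(1 - β) • a + c • d‖ ^ 2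
      = (1-β)^2 * ⟪a, a⟫ + 2*((1-β)*c) * ⟪a, d⟫ + c^2 * ⟪d, d⟫ := by
    rw [← real_inner_self_eq_norm_sq]
    simp only [inner_add_left, inner_add_right, real_inner_smul_left, real_inner_smul_right,
      real_inner_comm d a]
    ring
  have e2 : ‖a - d‖ ^ 2 = ⟪a, a⟫ - 2 * ⟪a, d⟫ + ⟪d, d⟫ := by
    rw [← real_inner_self_eq_norm_sq]
    simp only [inner_sub_left, inner_sub_right, real_inner_comm d a]
    ring
  have e3 : ‖a‖ ^ 2 = ⟪a, a⟫ := (real_inner_self_eq_norm_sq a).symm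
  have e4 : ‖d‖ ^ 2 = ⟪d, d⟫ := (real_inner_self_eq_norm_sq d).symm
  rw [e1, e2, e3, e4]
  set A := ⟪a, a⟫
  set D := ⟪d, d⟫
  set I := ⟪a, d⟫
  have hA : 0 ≤ A := real_inner_self_nonneg
  have hD : 0 ≤ D := real_inner_self_nonneg
  -- cross terms cancel
  have hcross : p * (2*((1-β)*c)) = 2 * (1 - p) := by
    rw [show p * (2*((1-β)*c)) = 2 * (p * (1-β) * c) by ring, hc]
  -- coefficient of A
  have hα : p * (1-β)^2 + (1 - p) ≤ 1 - p * β := by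
    nlinarith [mul_nonneg (mul_nonneg hp0.le hbpos.le) hβ0.le]
  -- coefficient of D
  have hpc : p * c ≤ 2 * (1 - p) := by nlinarith
  have h5 : p * c^2 + (1 - p) ≤ 5 / p := by
    rw [le_div_iff₀ hp0]
    nlinarith [sq_nonneg (p*c), mul_nonneg (mul_nonneg hp0.le hcnn) hcnn]
  have t1 : (p * (1-β)^2 + (1 - p)) * A ≤ (1 - p * β) * A :=
    mul_le_mul_of_nonneg_right hα hA
  have t2 : (p * c^2 + (1 - p)) * D ≤ (5 / p) * D :=
    mul_le_mul_of_nonneg_right h5 hD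
  have t3 : p * (2*((1-β)*c)) * I = 2 * (1 - p) * I := by rw [hcross]
  nlinarith [t1, t2, t3]
end

section
/- Let $F : \mathbb{R}^d \to \mathbb{R}$ be differentiable with $L$-Lipschitz gradient, let $0 < c_l \leq c_u$, $\eta > 0$ with $\eta L \leq \frac{c_l}{2 c_u^2}$, and let $\tilde\eta$ satisfy $\eta c_l \leq \tilde\eta \leq \eta c_u$. For $w^+ = w - \tilde\eta z$ with $z \in \mathbb{R}^d$, it holds that $F(w^+) \leq F(w) + \frac{\eta c_u}{2}\|\nabla F(w) - z\|^2 - \frac{\eta c_l}{2}\|\nabla F(w)\|^2 - \frac{\eta c_l}{4}\|z\|^2$. -/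
/-!
Along the segment `t ↦ w + t • v` the derivative of `F` exceeds `⟪∇F w, v⟫` by at most
`L t ‖v‖²`, which integrates to the quadratic upper bound
`F (w + v) ≤ F w + ⟪∇F w, v⟫ + L/2 ‖v‖²`. For `v = -η' • z`, polarization turns the
inner product term into `η'/2 (‖∇F w - z‖² - ‖∇F w‖² - ‖z‖²)`, and the step-size
condition gives `L η' ≤ 1/2`, so the curvature term eats at most half of `-η'/2 ‖z‖²`.
-/

open RealInnerProductSpace Set

section LipschitzGradient

variable {E : Type*} [NormedAddCommGroup E] [InnerProductSpace ℝ E] [CompleteSpace E]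
  {F : E → ℝ}

theorem hasDerivAt_comp_add_smul {x v : E} {t : ℝ}
    (hF : DifferentiableAt ℝ F (x + t • v)) :
    HasDerivAt (fun s : ℝ => F (x + s • v)) ⟪gradient F (x + t • v), v⟫ t := by
  have hline : HasDerivAt (fun s : ℝ => x + s • v) v t := by
    simpa using ((hasDerivAt_id t).smul_const v).const_add x
  exact hF.hasGradientAt.hasFDerivAt.comp_hasDerivAt t hline

theorem le_add_inner_gradient_add_sq_of_lipschitz {L : ℝ} (hF : Differentiable ℝ F)
    (hLip : ∀ x y, ‖gradient F x - gradient F y‖ ≤ L * ‖x - y‖) (x v : E) :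
    F (x + v) ≤ F x + ⟪gradient F x, v⟫ + L / 2 * ‖v‖ ^ 2 := by
  have hφ (t : ℝ) := hasDerivAt_comp_add_smul (x := x) (v := v) (hF (x + t • v))
  have hB (t : ℝ) :
      HasDerivAt (fun s : ℝ => F x + s * ⟪gradient F x, v⟫ + L / 2 * s ^ 2 * ‖v‖ ^ 2)
        (⟪gradient F x, v⟫ + L * t * ‖v‖ ^ 2) t := by
    refine ((((hasDerivAt_id t).mul_const _).const_add (F x)).add
      (((hasDerivAt_pow 2 t).const_mul (L / 2)).mul_const (‖v‖ ^ 2))).congr_deriv ?_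
    push_cast
    ring
  have hslope (t : ℝ) (ht : t ∈ Ico (0 : ℝ) 1) :
      ⟪gradient F (x + t • v), v⟫ ≤ ⟪gradient F x, v⟫ + L * t * ‖v‖ ^ 2 := by
    have hdiff : ⟪gradient F (x + t • v) - gradient F x, v⟫ ≤ L * t * ‖v‖ ^ 2 :=
      calc ⟪gradient F (x + t • v) - gradient F x, v⟫
          ≤ ‖gradient F (x + t • v) - gradient F x‖ * ‖v‖ := real_inner_le_norm _ _
        _ ≤ L * ‖x + t • v - x‖ * ‖v‖ := by gcongr; exact hLip _ _
        _ = L * t * ‖v‖ ^ 2 := by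
          rw [add_sub_cancel_left, norm_smul, Real.norm_of_nonneg ht.1]; ring
    rw [inner_sub_left] at hdiff
    linarith
  have key := image_le_of_deriv_right_le_deriv_boundary
    (fun t _ => (hφ t).continuousAt.continuousWithinAt) (fun t _ => (hφ t).hasDerivWithinAt)
    (by simp) (fun t _ => (hB t).continuousAt.continuousWithinAt)
    (fun t _ => (hB t).hasDerivWithinAt) hslope (right_mem_Icc.mpr zero_le_one)
  simpa using key

theorem apply_sub_smul_le_of_lipschitz {L : ℝ} (hF : Differentiable ℝ F)
    (hLip : ∀ x y, ‖gradient F x - gradient F y‖ ≤ L * ‖x - y‖) (τ : ℝ) (w z : E) :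
    F (w - τ • z) ≤ F w + τ / 2 * ‖gradient F w - z‖ ^ 2 - τ / 2 * ‖gradient F w‖ ^ 2
      - τ / 2 * (1 - L * τ) * ‖z‖ ^ 2 := by
  have hdescent := le_add_inner_gradient_add_sq_of_lipschitz hF hLip w (-(τ • z))
  rw [← sub_eq_add_neg, inner_neg_right, real_inner_smul_right, norm_neg, norm_smul,
    Real.norm_eq_abs, mul_pow, sq_abs] at hdescent
  have hpolar := norm_sub_sq_real (gradient F w) z
  linear_combination hdescent - τ / 2 * hpolar

end LipschitzGradient

theorem mul_le_half_of_step_bounds {L η cl cu η' : ℝ} (hcl : 0 ≤ cl) (hclu : cl ≤ cu) (hη : 0 < η)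
    (hηL : η * L ≤ cl / (2 * cu ^ 2)) (hη'l : η * cl ≤ η') (hη'u : η' ≤ η * cu) :
    L * η' ≤ 1 / 2 := by
  have hη' : 0 ≤ η' := (mul_nonneg hη.le hcl).trans hη'l
  rcases le_or_gt L 0 with hL | hL
  · nlinarith
  have hcu : 0 < cu := by
    by_contra! hcu
    have : cl / (2 * cu ^ 2) ≤ 0 :=
      div_nonpos_of_nonpos_of_nonneg (hclu.trans hcu) (by positivity)
    nlinarith [mul_pos hη hL]
  calc L * η' ≤ cu * (η * L) := by nlinarith
    _ ≤ cu * (cl / (2 * cu ^ 2)) := by gcongr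
    _ = cl / cu / 2 := by field_simp
    _ ≤ 1 / 2 := by gcongr; exact div_le_one_of_le₀ hclu hcu.le

theorem adaptive_descent_lemma {d : ℕ} (F : EuclideanSpace ℝ (Fin d) → ℝ)
    (L η cl cu η' : ℝ) (hF : Differentiable ℝ F)
    (hLip : ∀ x y, ‖gradient F x - gradient F y‖ ≤ L * ‖x - y‖)
    (hcl : 0 < cl) (hclu : cl ≤ cu) (hη : 0 < η) (hηL : η * L ≤ cl / (2 * cu ^ 2))
    (hη'l : η * cl ≤ η') (hη'u : η' ≤ η * cu)
    (w z : EuclideanSpace ℝ (Fin d)) :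
    F (w - η' • z) ≤ F w + (η * cu / 2) * ‖gradient F w - z‖ ^ 2
      - (η * cl / 2) * ‖gradient F w‖ ^ 2 - (η * cl / 4) * ‖z‖ ^ 2 := by
  have hstep := apply_sub_smul_le_of_lipschitz hF hLip η' w z
  have hLη' := mul_le_half_of_step_bounds hcl.le hclu hη hηL hη'l hη'u
  have hcurv : η * cl / 4 ≤ η' / 2 * (1 - L * η') := by
    nlinarith [(mul_nonneg hη.le hcl.le).trans hη'l]
  have hgz : η' / 2 * ‖gradient F w - z‖ ^ 2 ≤ η * cu / 2 * ‖gradient F w - z‖ ^ 2 := by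
    gcongr
  have hg : η * cl / 2 * ‖gradient F w‖ ^ 2 ≤ η' / 2 * ‖gradient F w‖ ^ 2 := by gcongr
  have hz : η * cl / 4 * ‖z‖ ^ 2 ≤ η' / 2 * (1 - L * η') * ‖z‖ ^ 2 := by gcongr
  linarith
end
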